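/- The coefficients $b_r = \frac{2}{\pi} \frac{((\frac{r}{r-2})^2-1)((r-2)!!)^2}{r!}$ defined for odd integers $r \geq 3$ satisfy $b_3 = \frac{8}{3\pi}$, $b_r \geq 0$ for all odd $r \geq 3$, and $\sum_{r \in 2\mathbb{N}+3} b_r = 1$. -/

import Mathlib

/-!
Writing `r = 2n + 3`, one has `b_r = (8 / π) a_n / ((2n + 1)(2n + 3))` with
`a_n = centralBinom n / 4 ^ n`, the coefficients of the binomial series `(1 - x)^(-1/2) = Σ a_n x^n`.
Since `2 / ((2n + 1)(2n + 3)) = ∫₀¹ u^(2n) (1 - u²) du`, summing under the integral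
(dominated convergence, the terms being nonnegative) gives
`Σ b_r = (4 / π) ∫₀¹ (1 - u²) / √(1 - u²) du = (4 / π) ∫₀¹ √(1 - u²) du = 1`.
-/

open Real Nat

/-- The coefficient `b_r` for odd `r = 2n+3`. -/
noncomputable def brCoef (n : ℕ) : ℝ :=
  (2 / π) * ((((2 * n + 3 : ℕ) : ℝ) / ((2 * n + 1 : ℕ) : ℝ)) ^ 2 - 1) *
    ((Nat.doubleFactorial (2 * n + 1) : ℝ)) ^ 2 / (Nat.factorial (2 * n + 3))

lemma Ring.multichoose_succ_eq {K : Type*} [Field K] [CharZero K] (r : K) (n : ℕ) :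
    Ring.multichoose r (n + 1) = Ring.multichoose r n * (r + n) / (n + 1) := by
  have key (m : ℕ) : (m ! : K) * Ring.multichoose r m = (ascPochhammer K m).eval r := by
    rw [← nsmul_eq_mul, Ring.factorial_nsmul_multichoose_eq_ascPochhammer,
      Polynomial.ascPochhammer_smeval_eq_eval]
  have h := key (n + 1)
  rw [ascPochhammer_succ_eval, ← key, Nat.factorial_succ] at h
  push_cast at h
  rw [eq_div_iff (Nat.cast_add_one_ne_zero n)]
  apply mul_left_cancel₀ (Nat.cast_ne_zero.mpr (factorial_ne_zero n) : (n ! : K) ≠ 0)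
  linear_combination h

lemma multichoose_half_eq_centralBinom_div_four_pow (n : ℕ) :
    Ring.multichoose (1 / 2 : ℝ) n = centralBinom n / 4 ^ n := by
  induction n with
  | zero => simp
  | succ n ih =>
    have h : ((n + 1 : ℕ) : ℝ) * centralBinom (n + 1) = 2 * (2 * n + 1) * centralBinom n := by
      exact_mod_cast Nat.succ_mul_centralBinom_succ n
    push_cast at h
    rw [Ring.multichoose_succ_eq, ih, div_mul_eq_mul_div, div_div,
      div_eq_div_iff (by positivity) (by positivity), pow_succ]
    linear_combination -(4 ^ n : ℝ) * h

lemma hasSum_centralBinom_div_four_pow_mul_pow {x : ℝ} (hx : |x| < 1) :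
    HasSum (fun n ↦ (centralBinom n : ℝ) / 4 ^ n * x ^ n) (√(1 - x))⁻¹ := by
  have h := (Real.one_div_one_sub_rpow_hasFPowerSeriesOnBall_zero (1 / 2)).hasSum
    (y := x) (by simpa [enorm_eq_nnnorm, ← NNReal.coe_lt_coe] using hx)
  simp only [FormalMultilinearSeries.ofScalars_apply_eq, smul_eq_mul, zero_add,
    ← Ring.multichoose_eq, multichoose_half_eq_centralBinom_div_four_pow] at h
  rwa [Real.sqrt_eq_rpow, ← one_div]

lemma hasSum_centralBinom_mul_pow_mul_one_sub_sq {u : ℝ} (hu : u ^ 2 ≤ 1) :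
    HasSum (fun n ↦ (centralBinom n : ℝ) / 4 ^ n * (u ^ (2 * n) * (1 - u ^ 2))) √(1 - u ^ 2) := by
  rcases hu.lt_or_eq with hu | hu
  · have h := (hasSum_centralBinom_div_four_pow_mul_pow
      (x := u ^ 2) (by rwa [abs_of_nonneg (sq_nonneg u)])).mul_right (1 - u ^ 2)
    rw [← div_eq_inv_mul, Real.div_sqrt] at h
    simpa only [pow_mul, mul_assoc] using h
  · simp [hu, hasSum_zero]

lemma integral_pow_mul_one_sub_sq (n : ℕ) :
    (∫ u in (0 : ℝ)..1, u ^ (2 * n) * (1 - u ^ 2)) = (2 : ℝ) / ((2 * n + 1) * (2 * n + 3)) := by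
  simp only [mul_one_sub, ← pow_add]
  rw [intervalIntegral.integral_sub (intervalIntegral.intervalIntegrable_pow _)
    (intervalIntegral.intervalIntegrable_pow _), integral_pow, integral_pow]
  push_cast
  field_simp
  ring

lemma integral_sqrt_one_sub_sq_zero_one : (∫ u in (0 : ℝ)..1, √(1 - u ^ 2)) = π / 4 := by
  have hcont : Continuous fun u : ℝ ↦ √(1 - u ^ 2) := by fun_prop
  have hsymm : (∫ u in (-1 : ℝ)..0, √(1 - u ^ 2)) = ∫ u in (0 : ℝ)..1, √(1 - u ^ 2) := by
    have h := intervalIntegral.integral_comp_neg (a := (0 : ℝ)) (b := 1) fun u ↦ √(1 - u ^ 2)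
    simp only [neg_sq, neg_zero] at h
    exact h.symm
  have h := intervalIntegral.integral_add_adjacent_intervals
    (hcont.intervalIntegrable (μ := MeasureTheory.volume) (-1) 0) (hcont.intervalIntegrable 0 1)
  rw [hsymm, integral_sqrt_one_sub_sq] at h
  linarith

lemma hasSum_integral_centralBinom_mul_pow_mul_one_sub_sq :
    HasSum (fun n ↦ ∫ u in (0 : ℝ)..1, (centralBinom n : ℝ) / 4 ^ n * (u ^ (2 * n) * (1 - u ^ 2)))
      (∫ u in (0 : ℝ)..1, √(1 - u ^ 2)) := by
  set F : ℕ → ℝ → ℝ := fun n u ↦ (centralBinom n : ℝ) / 4 ^ n * (u ^ (2 * n) * (1 - u ^ 2))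
  have hsq {u : ℝ} (hu : u ∈ Set.uIoc (0 : ℝ) 1) : u ^ 2 ≤ 1 := by
    rw [Set.uIoc_of_le zero_le_one] at hu
    nlinarith [hu.1, hu.2]
  have hF_nonneg {u : ℝ} (hu : u ^ 2 ≤ 1) (n : ℕ) : 0 ≤ F n u := by
    have : 0 ≤ 1 - u ^ 2 := by linarith
    exact mul_nonneg (by positivity) (mul_nonneg (by rw [pow_mul]; positivity) this)
  -- `F` is its own dominating function: its sum `√(1 - u²)` is integrable.
  refine intervalIntegral.hasSum_integral_of_dominated_convergence F
    (fun n ↦ (by fun_prop : Continuous (F n)).aestronglyMeasurable)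
    (fun n ↦ .of_forall fun u hu ↦ (Real.norm_of_nonneg (hF_nonneg (hsq hu) n)).le)
    (.of_forall fun u hu ↦ (hasSum_centralBinom_mul_pow_mul_one_sub_sq (hsq hu)).summable)
    ?_ (.of_forall fun u hu ↦ hasSum_centralBinom_mul_pow_mul_one_sub_sq (hsq hu))
  rw [intervalIntegrable_congr fun u hu ↦
    (hasSum_centralBinom_mul_pow_mul_one_sub_sq (hsq hu)).tsum_eq]
  exact (by fun_prop : Continuous fun u : ℝ ↦ √(1 - u ^ 2)).intervalIntegrable 0 1

lemma Nat.cast_doubleFactorial_two_mul_add_one (n : ℕ) :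
    ((2 * n + 1)‼ : ℝ) = (2 * n + 1) * (2 * n)! / (2 ^ n * n !) := by
  have h := Nat.factorial_eq_mul_doubleFactorial (2 * n)
  rw [Nat.doubleFactorial_two_mul, Nat.factorial_succ] at h
  rw [eq_div_iff (by positivity)]
  exact_mod_cast h.symm

lemma Nat.cast_centralBinom (n : ℕ) : (centralBinom n : ℝ) = (2 * n)! / (n ! * n !) := by
  rw [centralBinom_eq_two_mul_choose, Nat.cast_choose ℝ (by omega), show 2 * n - n = n by omega]

lemma brCoef_eq (n : ℕ) :
    brCoef n = 4 / π * (centralBinom n / 4 ^ n * (2 / ((2 * n + 1) * (2 * n + 3)))) := by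
  rw [brCoef, Nat.cast_doubleFactorial_two_mul_add_one, Nat.cast_centralBinom,
    show 2 * n + 3 = 2 * n + 2 + 1 by ring, Nat.factorial_succ, Nat.factorial_succ,
    Nat.factorial_succ, show (4 : ℝ) ^ n = (2 ^ n) ^ 2 by rw [← pow_mul, mul_comm, pow_mul]; norm_num]
  push_cast
  field_simp
  ring

theorem brCoef_properties :
    brCoef 0 = 8 / (3 * π) ∧ (∀ n : ℕ, 0 ≤ brCoef n) ∧ HasSum brCoef 1 := by
  refine ⟨by norm_num [brCoef, Nat.factorial]; ring, fun n ↦ by rw [brCoef_eq]; positivity, ?_⟩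
  have h := hasSum_integral_centralBinom_mul_pow_mul_one_sub_sq.mul_left (4 / π)
  simp only [intervalIntegral.integral_const_mul, integral_pow_mul_one_sub_sq,
    integral_sqrt_one_sub_sq_zero_one, ← brCoef_eq] at h
  rwa [show 4 / π * (π / 4) = 1 by field_simp] at h
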